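/- Let 2 < p < ∞ be real. Let X be a Banach lattice and let (x_n)_{n∈ℕ} be a sequence in X that is equivalent to the canonical basis of ℓ_p, i.e., there are constants c, C > 0 such that c (∑_{i=1}^m |λ_i|^p)^{1/p} ≤ ‖∑_{i=1}^m λ_i x_i‖ ≤ C (∑_{i=1}^m |λ_i|^p)^{1/p} for all m and all real scalars λ_1, …, λ_m. Then the sequence of absolute values (|x_n|)_{n∈ℕ} is weakly null: for every continuous linear functional φ on X, φ(|x_n|) → 0 as n → ∞. -/

import Mathlib

/-!
Pass to a subsequence `y k = x (n k)` with `ε ≤ |φ |y k||`; then `ε m ≤ ‖φ‖ ‖∑_{k<m} |y k|‖`, so it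
suffices to show `‖∑_{k<m} |y k|‖ = O(m ^ (1/2 + 1/p))`, which is `o(m)` because `p > 2`.
In a vector lattice `∑ |y k|` is the supremum of the `2 ^ m` signed sums `S σ = ∑ ± y k`, and each
of them is dominated by their average: with `A m = ∑_s |∑_k s k|` over all sign vectors `s`,
`A m • S σ = m • ∑_s sign (∑_k σ k s k) • S s ≤ m • ∑_s |S s|`. The upper `ℓ_p` estimate bounds every
`‖S s‖` by `C m ^ (1/p)`, and Khintchine's inequality `A m ≥ 2 ^ m √(m / 3)` gives
`‖∑ |y k|‖ ≤ √(3 m) C m ^ (1/p)`.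
-/

open Finset Filter Topology

section SolidNorm

variable {X : Type*} [NormedAddCommGroup X] [Lattice X] [HasSolidNorm X] [IsOrderedAddMonoid X]

lemma norm_le_norm_of_nonneg_of_le {a b : X} (ha : 0 ≤ a) (hab : a ≤ b) : ‖a‖ ≤ ‖b‖ :=
  norm_le_norm_of_abs_le_abs <| by rwa [abs_of_nonneg ha, abs_of_nonneg (ha.trans hab)]

variable [NormedSpace ℝ X]

/-- The positive cone is closed and `0 ≤ 2 • w → 0 ≤ w` in a lattice-ordered group, so it contains
all dyadic multiples of a positive vector, hence all its positive multiples. -/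
lemma smul_nonneg_of_hasSolidNorm {r : ℝ} (hr : 0 ≤ r) {v : X} (hv : 0 ≤ v) : 0 ≤ r • v := by
  have dyadic : ∀ n k : ℕ, 0 ≤ ((k : ℝ) / 2 ^ n) • v := by
    intro n
    induction n with
    | zero => simpa [Nat.cast_smul_eq_nsmul] using fun k => nsmul_nonneg hv k
    | succ n ih =>
      intro k
      refine nsmul_two_semiclosed ?_
      rw [← Nat.cast_smul_eq_nsmul ℝ, smul_smul, pow_succ]
      convert ih k using 2
      push_cast
      field_simp
  have approx : Tendsto (fun n : ℕ => (⌊r * 2 ^ n⌋₊ : ℝ) / 2 ^ n) atTop (𝓝 r) :=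
    (tendsto_nat_floor_mul_div_atTop hr).comp (tendsto_pow_atTop_atTop_of_one_lt one_lt_two)
  exact (isClosed_nonneg.preimage (continuous_id.smul continuous_const)).mem_of_tendsto approx
    (Eventually.of_forall fun n => dyadic n _)

instance HasSolidNorm.isOrderedModule : IsOrderedModule ℝ X :=
  .of_smul_nonneg fun _ ha _ hb => smul_nonneg_of_hasSolidNorm ha hb

end SolidNorm

def boolSign (b : Bool) : ℝ := if b then 1 else -1

@[simp] lemma boolSign_true : boolSign true = 1 := rfl

@[simp] lemma boolSign_false : boolSign false = -1 := rfl

@[simp] lemma abs_boolSign (b : Bool) : |boolSign b| = 1 := by cases b <;> simp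

lemma boolSign_beq (a b : Bool) : boolSign (a == b) = boolSign a * boolSign b := by
  cases a <;> cases b <;> simp

lemma boolSign_decide_nonneg_mul (t : ℝ) : boolSign (decide (0 ≤ t)) * t = |t| := by
  by_cases ht : 0 ≤ t
  · simp [ht, abs_of_nonneg ht]
  · simp [ht, abs_of_neg (not_le.1 ht)]

section SignedSum

variable {E : Type*} [AddCommGroup E] [Module ℝ E]

def signedSum {m : ℕ} (y : Fin m → E) (σ : Fin m → Bool) : E := ∑ j, boolSign (σ j) • y j

lemma signedSum_cons {m : ℕ} (y : Fin (m + 1) → E) (b : Bool) (σ : Fin m → Bool) :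
    signedSum y (Fin.cons b σ) = boolSign b • y 0 + signedSum (Fin.tail y) σ := by
  simp [signedSum, Fin.sum_univ_succ, Fin.tail]

lemma signedSum_boolSign_smul {m : ℕ} (y : Fin m → E) (σ s : Fin m → Bool) :
    signedSum (fun j => boolSign (σ j) • y j) s = signedSum y fun j => σ j == s j := by
  simp only [signedSum, smul_smul, boolSign_beq, mul_comm]

lemma sum_bool_pi_succ {M : Type*} [AddCommMonoid M] {m : ℕ} (F : (Fin (m + 1) → Bool) → M) :
    ∑ s, F s = ∑ b : Bool, ∑ s : Fin m → Bool, F (Fin.cons b s) := by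
  rw [← (Fin.consEquiv fun _ => Bool).sum_comp, Fintype.sum_prod_type]
  rfl

end SignedSum

section LatticeOrderedGroup

variable {E : Type*} [AddCommGroup E] [Lattice E] [Module ℝ E]

lemma boolSign_smul_le_abs (b : Bool) (a : E) : boolSign b • a ≤ |a| := by
  cases b <;> simp [le_abs_self, neg_le_abs]

lemma abs_boolSign_smul (b : Bool) (a : E) : |boolSign b • a| = |a| := by
  cases b <;> simp

variable [IsOrderedAddMonoid E]

lemma abs_signedSum_le {m : ℕ} (y : Fin m → E) (σ : Fin m → Bool) :
    |signedSum y σ| ≤ ∑ j, |y j| := by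
  refine (le_sum_of_subadditive _ abs_zero.le abs_add_le _ _).trans_eq ?_
  simp only [abs_boolSign_smul]

lemma sum_abs_le_of_forall_signedSum_le {m : ℕ} (y : Fin m → E) {u : E}
    (h : ∀ σ, signedSum y σ ≤ u) : ∑ j, |y j| ≤ u := by
  induction m generalizing u with
  | zero => simpa [signedSum] using h ![]
  | succ m ih =>
    rw [Fin.sum_univ_succ, ← le_sub_iff_add_le', abs, sub_sup]
    refine ih (Fin.tail y) fun σ => le_inf ?_ ?_
    · simpa [signedSum_cons, le_sub_iff_add_le'] using h (Fin.cons true σ)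
    · simpa [signedSum_cons, le_sub_iff_add_le', add_comm] using h (Fin.cons false σ)

end LatticeOrderedGroup

section Rademacher

def rademacherSum {m : ℕ} (s : Fin m → Bool) : ℝ := ∑ j, boolSign (s j)

lemma rademacherSum_cons {m : ℕ} (b : Bool) (s : Fin m → Bool) :
    rademacherSum (Fin.cons b s) = boolSign b + rademacherSum s := by
  simp [rademacherSum, Fin.sum_univ_succ]

lemma sum_rademacherSum_succ {m : ℕ} (F : ℝ → ℝ) :
    ∑ s : Fin (m + 1) → Bool, F (rademacherSum s) =
      ∑ s : Fin m → Bool, (F (rademacherSum s + 1) + F (rademacherSum s - 1)) := by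
  simp only [sum_bool_pi_succ, rademacherSum_cons, Fintype.sum_bool, boolSign_true,
    boolSign_false, ← sum_add_distrib, add_comm (1 : ℝ), neg_add_eq_sub]

lemma sum_rademacherSum_sq (m : ℕ) : ∑ s : Fin m → Bool, rademacherSum s ^ 2 = 2 ^ m * m := by
  induction m with
  | zero => simp [rademacherSum]
  | succ m ih =>
    rw [sum_rademacherSum_succ (· ^ 2)]
    simp only [show ∀ t : ℝ, (t + 1) ^ 2 + (t - 1) ^ 2 = 2 * t ^ 2 + 2 by intro t; ring,
      sum_add_distrib, ← mul_sum, ih, sum_const, card_univ, Fintype.card_fun, Fintype.card_bool,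
      Fintype.card_fin, nsmul_eq_mul]
    push_cast
    ring

lemma sum_rademacherSum_pow_four (m : ℕ) :
    ∑ s : Fin m → Bool, rademacherSum s ^ 4 = 2 ^ m * (3 * m ^ 2 - 2 * m) := by
  induction m with
  | zero => simp [rademacherSum]
  | succ m ih =>
    rw [sum_rademacherSum_succ (· ^ 4)]
    simp only [show ∀ t : ℝ, (t + 1) ^ 4 + (t - 1) ^ 4 = 2 * t ^ 4 + 12 * t ^ 2 + 2 by
        intro t; ring,
      sum_add_distrib, ← mul_sum, ih, sum_rademacherSum_sq, sum_const, card_univ,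
      Fintype.card_fun, Fintype.card_bool, Fintype.card_fin, nsmul_eq_mul]
    push_cast
    ring

def rademacherAbsSum (m : ℕ) : ℝ := ∑ s : Fin m → Bool, |rademacherSum s|

/-- Khintchine's lower bound `E |∑ ± 1| ≥ √(m / 3)`, from the second and fourth moments
by two applications of Cauchy–Schwarz. -/
lemma four_pow_mul_le_three_mul_rademacherAbsSum_sq (m : ℕ) :
    4 ^ m * m ≤ 3 * rademacherAbsSum m ^ 2 := by
  set A := rademacherAbsSum m
  set S₃ := ∑ s : Fin m → Bool, |rademacherSum s| ^ 3
  have moment_two_sq : (2 ^ m * m : ℝ) ^ 2 ≤ A * S₃ := by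
    have cs := sum_mul_sq_le_sq_mul_sq univ (fun s : Fin m → Bool => √|rademacherSum s|)
      (fun s => √|rademacherSum s| * |rademacherSum s|)
    have hf (t : ℝ) : √|t| ^ 2 = |t| := Real.sq_sqrt (abs_nonneg t)
    have hfg (t : ℝ) : √|t| * (√|t| * |t|) = t ^ 2 := by
      rw [← mul_assoc, ← sq, hf, abs_mul_abs_self, sq]
    have hg (t : ℝ) : (√|t| * |t|) ^ 2 = |t| ^ 3 := by rw [mul_pow, hf]; ring
    simp only [hfg, hf, hg, sum_rademacherSum_sq] at cs
    exact cs
  have moment_three_sq : S₃ ^ 2 ≤ (2 ^ m * m) * (2 ^ m * (3 * m ^ 2 - 2 * m)) := by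
    have cs := sum_mul_sq_le_sq_mul_sq univ (fun s : Fin m → Bool => |rademacherSum s|)
      (fun s => rademacherSum s ^ 2)
    have hfg (t : ℝ) : |t| * t ^ 2 = |t| ^ 3 := by rw [← sq_abs t]; ring
    have hg (t : ℝ) : (t ^ 2) ^ 2 = t ^ 4 := by ring
    simp only [hfg, sq_abs, hg, sum_rademacherSum_sq, sum_rademacherSum_pow_four] at cs
    exact cs
  rcases Nat.eq_zero_or_pos m with rfl | hm
  · simp [sq_nonneg]
  have hpos : (0 : ℝ) < 2 ^ m * 2 ^ m * m ^ 3 := by positivity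
  have key : (2 ^ m * m : ℝ) ^ 4 ≤ A ^ 2 * (2 ^ m * m * (2 ^ m * (3 * m ^ 2))) :=
    calc (2 ^ m * m : ℝ) ^ 4 = ((2 ^ m * m) ^ 2) ^ 2 := by ring
      _ ≤ (A * S₃) ^ 2 := pow_le_pow_left₀ (by positivity) moment_two_sq 2
      _ = A ^ 2 * S₃ ^ 2 := by ring
      _ ≤ A ^ 2 * (2 ^ m * m * (2 ^ m * (3 * m ^ 2))) := by
        gcongr
        exact moment_three_sq.trans (by gcongr; linarith [(Nat.cast_nonneg m : (0 : ℝ) ≤ m)])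
  refine le_of_mul_le_mul_left ?_ hpos
  rw [show (4 : ℝ) ^ m = 2 ^ m * 2 ^ m by rw [← mul_pow]; norm_num]
  linarith

lemma rademacherAbsSum_pos {m : ℕ} (hm : 0 < m) : 0 < rademacherAbsSum m := by
  have h₀ : 0 ≤ rademacherAbsSum m := sum_nonneg fun s _ => abs_nonneg _
  refine h₀.lt_of_ne' fun hA => ?_
  have := four_pow_mul_le_three_mul_rademacherAbsSum_sq m
  rw [hA] at this
  have : (0 : ℝ) < 4 ^ m * m := by positivity
  linarith

noncomputable def rademacherCoeff {m : ℕ} (j : Fin m) : ℝ :=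
  ∑ s : Fin m → Bool, boolSign (decide (0 ≤ rademacherSum s)) * boolSign (s j)

lemma rademacherCoeff_eq {m : ℕ} (i j : Fin m) : rademacherCoeff i = rademacherCoeff j := by
  let π : (Fin m → Bool) ≃ (Fin m → Bool) := Equiv.arrowCongr (Equiv.swap i j) (Equiv.refl Bool)
  have hπ (s : Fin m → Bool) : rademacherSum (π s) = rademacherSum s :=
    (Equiv.swap i j).symm.sum_comp fun k => boolSign (s k)
  rw [rademacherCoeff, ← π.sum_comp]
  refine sum_congr rfl fun s _ => ?_
  simp [π, hπ]

lemma sum_rademacherCoeff (m : ℕ) : ∑ j : Fin m, rademacherCoeff j = rademacherAbsSum m := by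
  simp only [rademacherCoeff, rademacherAbsSum]
  rw [sum_comm]
  refine sum_congr rfl fun s _ => ?_
  rw [← mul_sum, ← rademacherSum, boolSign_decide_nonneg_mul]

lemma natCast_mul_rademacherCoeff {m : ℕ} (j : Fin m) :
    m * rademacherCoeff j = rademacherAbsSum m := by
  rw [← sum_rademacherCoeff, sum_congr rfl fun i _ => rademacherCoeff_eq i j]
  simp

end Rademacher

section OrderedModule

variable {E : Type*} [AddCommGroup E] [Module ℝ E]

lemma sum_sign_rademacherSum_smul_signedSum {m : ℕ} (y : Fin m → E) :
    ∑ s, boolSign (decide (0 ≤ rademacherSum s)) • signedSum y s =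
      ∑ j, rademacherCoeff j • y j := by
  simp only [signedSum, smul_sum, smul_smul, rademacherCoeff, sum_smul]
  exact sum_comm

variable [Lattice E] [IsOrderedAddMonoid E] [PosSMulMono ℝ E]

/-- Averaging the signed sums against the sign of the corresponding Rademacher sum recovers
`∑ j, y j` up to the factor `rademacherAbsSum m / m`. -/
lemma rademacherAbsSum_smul_sum_le {m : ℕ} (y : Fin m → E) :
    rademacherAbsSum m • ∑ j, y j ≤ (m : ℝ) • ∑ s, |signedSum y s| := by
  calc rademacherAbsSum m • ∑ j, y j = (m : ℝ) • ∑ j, rademacherCoeff j • y j := by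
        simp only [smul_sum, smul_smul, natCast_mul_rademacherCoeff]
    _ = (m : ℝ) • ∑ s, boolSign (decide (0 ≤ rademacherSum s)) • signedSum y s := by
        rw [sum_sign_rademacherSum_smul_signedSum]
    _ ≤ (m : ℝ) • ∑ s, |signedSum y s| :=
        smul_le_smul_of_nonneg_left (sum_le_sum fun s _ => boolSign_smul_le_abs _ _) m.cast_nonneg

lemma rademacherAbsSum_smul_signedSum_le {m : ℕ} (y : Fin m → E) (σ : Fin m → Bool) :
    rademacherAbsSum m • signedSum y σ ≤ (m : ℝ) • ∑ s, |signedSum y s| := by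
  let twist : (Fin m → Bool) ≃ (Fin m → Bool) :=
    Function.Involutive.toPerm (fun s j => σ j == s j) fun s => funext fun j => by
      dsimp only; cases σ j <;> cases s j <;> rfl
  calc rademacherAbsSum m • signedSum y σ
      ≤ (m : ℝ) • ∑ s, |signedSum (fun j => boolSign (σ j) • y j) s| :=
        rademacherAbsSum_smul_sum_le _
    _ = (m : ℝ) • ∑ s, |signedSum y s| := by
        simp only [signedSum_boolSign_smul]
        rw [← twist.sum_comp (fun s => |signedSum y s|)]
        rfl

end OrderedModule

section SolidNorm

variable {X : Type*} [NormedAddCommGroup X] [Lattice X] [HasSolidNorm X] [IsOrderedAddMonoid X]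
  [NormedSpace ℝ X]

/-- A lattice form of Khintchine's inequality. -/
theorem norm_sum_abs_le_sqrt_mul {m : ℕ} (y : Fin m → X) {R : ℝ}
    (hR : ∀ σ, ‖signedSum y σ‖ ≤ R) : ‖∑ j, |y j|‖ ≤ √(3 * m) * R := by
  rcases Nat.eq_zero_or_pos m with rfl | hm
  · simp
  set A := rademacherAbsSum m
  set U := ∑ s, |signedSum y s|
  have hR₀ : 0 ≤ R := (norm_nonneg _).trans (hR fun _ => true)
  have hA : 0 < A := rademacherAbsSum_pos hm
  have hU : ‖U‖ ≤ 2 ^ m * R :=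
    calc ‖U‖ ≤ ∑ s, ‖|signedSum y s|‖ := norm_sum_le _ _
      _ ≤ ∑ _s : Fin m → Bool, R := sum_le_sum fun s _ => (norm_abs_eq_norm _).trans_le (hR s)
      _ = 2 ^ m * R := by simp
  have hle : ∑ j, |y j| ≤ (m / A) • U := by
    refine sum_abs_le_of_forall_signedSum_le y fun σ => ?_
    rw [div_eq_inv_mul, mul_smul, le_inv_smul_iff_of_pos hA]
    exact rademacherAbsSum_smul_signedSum_le y σ
  have hcoeff : m / A * 2 ^ m ≤ √(3 * m) := by
    refine Real.le_sqrt_of_sq_le ?_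
    rw [div_mul_eq_mul_div, div_pow, div_le_iff₀ (by positivity)]
    calc ((m : ℝ) * 2 ^ m) ^ 2 = m * (4 ^ m * m) := by
          rw [show (4 : ℝ) = 2 ^ 2 by norm_num, ← pow_mul, mul_comm 2 m, pow_mul]; ring
      _ ≤ m * (3 * A ^ 2) :=
          mul_le_mul_of_nonneg_left (four_pow_mul_le_three_mul_rademacherAbsSum_sq m) m.cast_nonneg
      _ = 3 * m * A ^ 2 := by ring
  calc ‖∑ j, |y j|‖ ≤ ‖(m / A) • U‖ :=
        norm_le_norm_of_nonneg_of_le (sum_nonneg fun _ _ => abs_nonneg _) hle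
    _ = m / A * ‖U‖ := by rw [norm_smul, Real.norm_of_nonneg (by positivity)]
    _ ≤ m / A * (2 ^ m * R) := by gcongr
    _ ≤ √(3 * m) * R := by rw [← mul_assoc]; gcongr

end SolidNorm

lemma sum_fin_extend_eq {α β : Type*} [Zero α] [AddCommMonoid β] {ι : Type*} [Fintype ι]
    {g : ι → ℕ} (hg : g.Injective) (μ : ι → α) {M : ℕ} (hM : ∀ k, g k < M) (F : ℕ → α → β)
    (hF : ∀ i, F i 0 = 0) : ∑ i : Fin M, F i (Function.extend g μ 0 i) = ∑ k, F (g k) (μ k) := by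
  classical
  rw [Fin.sum_univ_eq_sum_range (fun i => F i (Function.extend g μ 0 i)),
    ← sum_subset (s₁ := univ.image g)]
  · simp [sum_image hg.injOn, hg.extend_apply]
  · intro i hi
    obtain ⟨k, -, rfl⟩ := mem_image.1 hi
    exact mem_range.2 (hM k)
  · intro i _ hi
    rw [Function.extend_apply' _ _ _ (by simpa using hi)]
    exact hF i

lemma norm_sum_smul_comp_le_of_upper_lp {E : Type*} [SeminormedAddCommGroup E] [NormedSpace ℝ E]
    {p : ℝ} (hp : 0 < p) {x : ℕ → E} {C : ℝ}
    (hupp : ∀ (m : ℕ) (lam : Fin m → ℝ),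
      ‖∑ i, lam i • x (i : ℕ)‖ ≤ C * (∑ i, |lam i| ^ p) ^ (1 / p))
    {ι : Type*} [Fintype ι] {g : ι → ℕ} (hg : g.Injective) (μ : ι → ℝ) :
    ‖∑ k, μ k • x (g k)‖ ≤ C * (∑ k, |μ k| ^ p) ^ (1 / p) := by
  set M := univ.sup g + 1
  have hM (k : ι) : g k < M := Nat.lt_succ_of_le (le_sup (mem_univ k))
  have hsum : ∑ i : Fin M, Function.extend g μ 0 i • x i = ∑ k, μ k • x (g k) :=
    sum_fin_extend_eq hg μ hM (fun i t => t • x i) fun _ => zero_smul _ _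
  have hnorm : ∑ i : Fin M, |Function.extend g μ 0 i| ^ p = ∑ k, |μ k| ^ p :=
    sum_fin_extend_eq hg μ hM (fun _ t => |t| ^ p) fun _ => by simp [Real.zero_rpow hp.ne']
  simpa only [hsum, hnorm] using hupp M fun i => Function.extend g μ 0 i

lemma norm_signedSum_comp_le_of_upper_lp {E : Type*} [SeminormedAddCommGroup E] [NormedSpace ℝ E]
    {p : ℝ} (hp : 0 < p) {x : ℕ → E} {C : ℝ}
    (hupp : ∀ (m : ℕ) (lam : Fin m → ℝ),
      ‖∑ i, lam i • x (i : ℕ)‖ ≤ C * (∑ i, |lam i| ^ p) ^ (1 / p))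
    {n : ℕ → ℕ} (hn : StrictMono n) {m : ℕ} (σ : Fin m → Bool) :
    ‖signedSum (fun k : Fin m => x (n k)) σ‖ ≤ C * (m : ℝ) ^ (1 / p) := by
  simpa [signedSum, Real.one_rpow] using
    norm_sum_smul_comp_le_of_upper_lp hp hupp (g := fun k : Fin m => n k)
      (hn.injective.comp Fin.val_injective) fun k => boolSign (σ k)

lemma sum_abs_apply_le_norm_mul_norm_sum_abs {X : Type*} [NormedAddCommGroup X] [Lattice X]
    [HasSolidNorm X] [IsOrderedAddMonoid X] [NormedSpace ℝ X] (φ : X →L[ℝ] ℝ) {m : ℕ}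
    (y : Fin m → X) : ∑ k, |φ (y k)| ≤ ‖φ‖ * ‖∑ k, |y k|‖ := by
  let σ : Fin m → Bool := fun k => decide (0 ≤ φ (y k))
  calc ∑ k, |φ (y k)| = φ (signedSum y σ) := by
        simp [σ, signedSum, boolSign_decide_nonneg_mul]
    _ ≤ ‖φ‖ * ‖signedSum y σ‖ := (le_abs_self _).trans (φ.le_opNorm _)
    _ ≤ ‖φ‖ * ‖∑ k, |y k|‖ := by
        gcongr
        exact norm_le_norm_of_abs_le_abs <| (abs_signedSum_le y σ).trans_eq
          (abs_of_nonneg (sum_nonneg fun _ _ => abs_nonneg _)).symm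

lemma nonpos_of_forall_mul_le_rpow {ε K q : ℝ} (hq : q < 1)
    (h : ∀ m : ℕ, ε * m ≤ K * (m : ℝ) ^ q) : ε ≤ 0 := by
  have decay : Tendsto (fun m : ℕ => K * (m : ℝ) ^ (q - 1)) atTop (𝓝 0) := by
    simpa using ((tendsto_rpow_neg_atTop (by linarith : 0 < 1 - q)).comp
      tendsto_natCast_atTop_atTop).const_mul K
  refine ge_of_tendsto decay (eventually_gt_atTop 0 |>.mono fun m hm => ?_)
  have hm : (0 : ℝ) < m := by exact_mod_cast hm
  rw [Real.rpow_sub hm, Real.rpow_one, ← mul_div_assoc, le_div_iff₀ hm]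
  exact h m

theorem abs_of_lp_sequence_weakly_null_general (p : ℝ) (hp : 2 < p)
    (X : Type) [NormedAddCommGroup X] [Lattice X] [HasSolidNorm X] [IsOrderedAddMonoid X] [NormedSpace ℝ X]
    (x : ℕ → X) (C : ℝ)
    (hupp : ∀ (m : ℕ) (lam : Fin m → ℝ),
      ‖∑ i, lam i • x (i : ℕ)‖ ≤ C * (∑ i, |lam i| ^ p) ^ (1 / p)) :
    ∀ φ : X →L[ℝ] ℝ, Filter.Tendsto (fun n => φ |x n|) Filter.atTop (nhds 0) := by
  intro φ
  have hp₀ : 0 < p := by linarith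
  rw [tendsto_zero_iff_abs_tendsto_zero, tendsto_order]
  refine ⟨fun a ha => Eventually.of_forall fun n => ha.trans_le (abs_nonneg _), fun ε hε => ?_⟩
  by_contra hfreq
  simp only [not_eventually, not_lt, Function.comp_apply] at hfreq
  obtain ⟨n, hn, hεn⟩ := extraction_of_frequently_atTop hfreq
  have hexp : 1 / 2 + 1 / p < 1 := by linarith [(one_div_lt_one_div hp₀ two_pos).2 hp]
  suffices ∀ m : ℕ, ε * m ≤ ‖φ‖ * √3 * C * (m : ℝ) ^ (1 / 2 + 1 / p) by
    linarith [nonpos_of_forall_mul_le_rpow hexp this]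
  intro m
  calc ε * m = ∑ _k : Fin m, ε := by simp [mul_comm]
    _ ≤ ∑ k : Fin m, |φ (|x (n k)|)| := sum_le_sum fun k _ => hεn k
    _ ≤ ‖φ‖ * ‖∑ k : Fin m, |x (n k)|‖ := by
        simpa using sum_abs_apply_le_norm_mul_norm_sum_abs φ fun k : Fin m => |x (n k)|
    _ ≤ ‖φ‖ * (√(3 * m) * (C * (m : ℝ) ^ (1 / p))) := by
        gcongr
        exact norm_sum_abs_le_sqrt_mul _ (norm_signedSum_comp_le_of_upper_lp hp₀ hupp hn)
    _ = ‖φ‖ * √3 * C * (m : ℝ) ^ (1 / 2 + 1 / p) := by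
        rw [Real.sqrt_mul zero_le_three, Real.rpow_add' m.cast_nonneg (by positivity),
          ← Real.sqrt_eq_rpow]
        ring

/-- **Theorem 3.3 consequence.** If `2 < p < ∞` and `(x_n)` is a sequence in a Banach
lattice `X` equivalent to the canonical basis of `ℓ_p`, then the sequence of absolute
values `(|x_n|)` is weakly null. -/
theorem abs_of_lp_sequence_weakly_null (p : ℝ) (hp : 2 < p)
    (X : Type) [NormedAddCommGroup X] [Lattice X] [HasSolidNorm X] [IsOrderedAddMonoid X] [NormedSpace ℝ X] [CompleteSpace X]
    (x : ℕ → X) (c C : ℝ) (hc : 0 < c) (hC : 0 < C)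
    (hlow : ∀ (m : ℕ) (lam : Fin m → ℝ),
      c * (∑ i, |lam i| ^ p) ^ (1 / p) ≤ ‖∑ i, lam i • x (i : ℕ)‖)
    (hupp : ∀ (m : ℕ) (lam : Fin m → ℝ),
      ‖∑ i, lam i • x (i : ℕ)‖ ≤ C * (∑ i, |lam i| ^ p) ^ (1 / p)) :
    ∀ φ : X →L[ℝ] ℝ, Filter.Tendsto (fun n => φ |x n|) Filter.atTop (nhds 0) :=
  abs_of_lp_sequence_weakly_null_general p hp X x C hupp
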